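/- Let G=(V,E) be a weighted undirected connected simple locally finite graph with edge weights w_{xy}>0. Then for every function f: V → ℝ and every vertex x, Γ₂(f,f)(x) ≥ (1/2)(Δf(x))² + ((1/2)t_w(x) − 1)·Γ(f,f)(x), where t_w(x) = min_{y∼x}{ 4w_{xy}/d_y + ∑_{x₁∼x, x₁∼y} min(w_{xy}/d_y, w_{xx₁}/d_{x₁})·(w_{x₁y}/w_{xy}) }, the inner sum running over all common neighbors x₁ of x and y. -/

import Mathlib

/-!
Expanding the definitions, `Γ₂(f,f)(x) = ½(Δf(x))² − Γ(f,f)(x) + E/(4d_x)`, where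
`E = ∑_{y∼x} (w_{xy}/d_y) ∑_{z∼y} w_{yz} (f(x) − 2f(y) + f(z))²` collects the squared second
differences along paths `x ∼ y ∼ z`. Keeping in `E` only the terms with `z = x` and with `z` a
common neighbour of `x` and `y`, and pairing the term of the path `x y z` with that of `x z y`,
the elementary bound `u² + v² ≤ (v − 2u)² + (u − 2v)²` gives
`E ≥ t_w(x) ∑_{y∼x} w_{xy}(f(y) − f(x))²`, and the last sum is `2d_xΓ(f,f)(x)`.
-/

open SimpleGraph Finset

variable {V : Type*}

/-- A system of edge weights on `G`: symmetric, positive on edges and zero elsewhere. -/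
def IsWeight (G : SimpleGraph V) (w : V → V → ℝ) : Prop :=
  (∀ u v, w u v = w v u) ∧ (∀ u v, G.Adj u v → 0 < w u v) ∧ (∀ u v, ¬G.Adj u v → w u v = 0)

/-- The weighted degree `d_x = ∑_{y∼x} w_{xy}`. -/
noncomputable def wdeg (G : SimpleGraph V) [G.LocallyFinite] (w : V → V → ℝ) (x : V) : ℝ :=
  ∑ y ∈ G.neighborFinset x, w x y

/-- The probability measure attached to a vertex `x`: `m_x(z) = w_{xz}/d_x` for `z ∼ x`. -/
noncomputable def wMeasure (G : SimpleGraph V) [G.LocallyFinite] [DecidableRel G.Adj]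
    (w : V → V → ℝ) (x z : V) : ℝ :=
  if G.Adj x z then w x z / wdeg G w x else 0

/-- A coupling (transfer plan) between the measures `m_x` and `m_y`. -/
def IsWCoupling (G : SimpleGraph V) [G.LocallyFinite] [DecidableRel G.Adj]
    (w : V → V → ℝ) (x y : V) (ξ : V → V → ℝ) : Prop :=
  (∀ u v, 0 ≤ ξ u v) ∧
  (∀ u v, ξ u v ≠ 0 → G.Adj x u ∧ G.Adj y v) ∧
  (∀ u, ∑ v ∈ G.neighborFinset y, ξ u v = wMeasure G w x u) ∧
  (∀ v, ∑ u ∈ G.neighborFinset x, ξ u v = wMeasure G w y v)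

/-- The transportation distance `W₁(m_x, m_y)`. -/
noncomputable def wW1 (G : SimpleGraph V) [G.LocallyFinite] [DecidableRel G.Adj]
    (w : V → V → ℝ) (x y : V) : ℝ :=
  sInf { c : ℝ | ∃ ξ : V → V → ℝ, IsWCoupling G w x y ξ ∧
    c = ∑ u ∈ G.neighborFinset x, ∑ v ∈ G.neighborFinset y, (G.dist u v : ℝ) * ξ u v }

/-- Ollivier's Ricci curvature `κ(x,y) = 1 - W₁(m_x,m_y)/d(x,y)` on a weighted graph. -/
noncomputable def wRicci (G : SimpleGraph V) [G.LocallyFinite] [DecidableRel G.Adj]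
    (w : V → V → ℝ) (x y : V) : ℝ :=
  1 - wW1 G w x y / (G.dist x y : ℝ)

/-- Positive part of a real number: `a₊ = max a 0`. -/
noncomputable def posPart' (a : ℝ) : ℝ := max a 0

/-- The weighted graph Laplacian `Δf(x) = (1/d_x)∑_{y∼x} w_{xy} f(y) - f(x)`. -/
noncomputable def wlap (G : SimpleGraph V) [G.LocallyFinite] (w : V → V → ℝ)
    (f : V → ℝ) (x : V) : ℝ :=
  (wdeg G w x)⁻¹ * ∑ y ∈ G.neighborFinset x, w x y * f y - f x

/-- The Bakry–Émery operator `Γ(f,g)(x) = (1/2)(Δ(fg) - fΔg - gΔf)(x)`. -/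
noncomputable def wgam (G : SimpleGraph V) [G.LocallyFinite] (w : V → V → ℝ)
    (f g : V → ℝ) (x : V) : ℝ :=
  (1 / 2) * (wlap G w (f * g) x - f x * wlap G w g x - g x * wlap G w f x)

/-- The Bakry–Émery operator `Γ₂(f,f)(x) = (1/2)(ΔΓ(f,f) - 2Γ(f,Δf))(x)`. -/
noncomputable def wgam2 (G : SimpleGraph V) [G.LocallyFinite] (w : V → V → ℝ)
    (f : V → ℝ) (x : V) : ℝ :=
  (1 / 2) * (wlap G w (wgam G w f f) x - 2 * wgam G w f (wlap G w f) x)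

/-- `t_w(x) = min_{y∼x} { 4w_{xy}/d_y + ∑_{x₁∼x, x₁∼y} ((w_{xy}/d_y) ∧ (w_{xx₁}/d_{x₁}))·(w_{x₁y}/w_{xy}) }`. -/
noncomputable def tw (G : SimpleGraph V) [G.LocallyFinite] [DecidableEq V]
    (w : V → V → ℝ) (x : V) : ℝ :=
  ⨅ y : G.neighborSet x,
    (4 * w x (y : V) / wdeg G w (y : V) +
      ∑ z ∈ G.neighborFinset x ∩ G.neighborFinset (y : V),
        min (w x (y : V) / wdeg G w (y : V)) (w x z / wdeg G w z) * (w z (y : V) / w x (y : V)))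

namespace Finset

variable {α : Type*}

theorem sum_sum_swap_of_symm {β : Type*} [AddCommMonoid β] (s : Finset α) (t : α → Finset α)
    (hst : ∀ a b, a ∈ s ∧ b ∈ t a ↔ b ∈ s ∧ a ∈ t b) (F : α → α → β) :
    ∑ a ∈ s, ∑ b ∈ t a, F b a = ∑ a ∈ s, ∑ b ∈ t a, F a b :=
  (sum_comm' fun a b => (hst a b).trans and_comm).symm

theorem sum_sum_le_of_add_swap_le (s : Finset α) (t : α → Finset α)
    (hst : ∀ a b, a ∈ s ∧ b ∈ t a ↔ b ∈ s ∧ a ∈ t b) {F H : α → α → ℝ}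
    (hFH : ∀ a ∈ s, ∀ b ∈ t a, F a b + F b a ≤ H a b + H b a) :
    ∑ a ∈ s, ∑ b ∈ t a, F a b ≤ ∑ a ∈ s, ∑ b ∈ t a, H a b := by
  have hsum : ∑ a ∈ s, ∑ b ∈ t a, (F a b + F b a) ≤ ∑ a ∈ s, ∑ b ∈ t a, (H a b + H b a) :=
    sum_le_sum fun a ha => sum_le_sum fun b hb => hFH a ha b hb
  simp only [sum_add_distrib, sum_sum_swap_of_symm s t hst F, sum_sum_swap_of_symm s t hst H]
    at hsum
  linarith

end Finset

theorem min_mul_add_sq_le {a b c : ℝ} (ha : 0 ≤ a) (hb : 0 ≤ b) (hc : 0 ≤ c) (u v : ℝ) :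
    min a b * c * (u ^ 2 + v ^ 2) ≤ a * c * (v - 2 * u) ^ 2 + b * c * (u - 2 * v) ^ 2 := by
  have hquad : u ^ 2 + v ^ 2 ≤ (v - 2 * u) ^ 2 + (u - 2 * v) ^ 2 := by nlinarith [sq_nonneg (u - v)]
  have hmin : 0 ≤ min a b * c := mul_nonneg (le_min ha hb) hc
  calc min a b * c * (u ^ 2 + v ^ 2)
      ≤ min a b * c * (v - 2 * u) ^ 2 + min a b * c * (u - 2 * v) ^ 2 := by
        rw [← mul_add]
        exact mul_le_mul_of_nonneg_left hquad hmin
    _ ≤ a * c * (v - 2 * u) ^ 2 + b * c * (u - 2 * v) ^ 2 := by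
        gcongr
        exacts [min_le_left a b, min_le_right a b]

namespace IsWeight

variable {G : SimpleGraph V} {w : V → V → ℝ}

theorem nonneg (hw : IsWeight G w) (u v : V) : 0 ≤ w u v := by
  by_cases h : G.Adj u v
  · exact (hw.2.1 u v h).le
  · exact (hw.2.2 u v h).ge

theorem wdeg_pos [G.LocallyFinite] (hw : IsWeight G w) {u v : V} (h : G.Adj u v) :
    0 < wdeg G w u :=
  sum_pos (fun y hy => hw.2.1 u y ((G.mem_neighborFinset u y).1 hy))
    ⟨v, (G.mem_neighborFinset u v).2 h⟩

theorem div_wdeg_nonneg [G.LocallyFinite] (hw : IsWeight G w) (u v : V) :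
    0 ≤ w u v / wdeg G w v :=
  div_nonneg (hw.nonneg u v) (sum_nonneg fun y _ => hw.nonneg v y)

end IsWeight

section Laplacian

variable (G : SimpleGraph V) [G.LocallyFinite] (w : V → V → ℝ)

theorem wlap_eq_sum_sub (f : V → ℝ) {x : V} (hx : wdeg G w x ≠ 0) :
    wlap G w f x = (wdeg G w x)⁻¹ * ∑ y ∈ G.neighborFinset x, w x y * (f y - f x) := by
  simp only [wlap, mul_sub, sum_sub_distrib, ← sum_mul]
  field_simp
  rw [wdeg, mul_comm]

theorem wgam_eq_sum (f g : V → ℝ) {x : V} (hx : wdeg G w x ≠ 0) :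
    wgam G w f g x = (1 / 2) * (wdeg G w x)⁻¹ *
      ∑ y ∈ G.neighborFinset x, w x y * ((f y - f x) * (g y - g x)) := by
  have hexpand : ∑ y ∈ G.neighborFinset x, w x y * ((f y - f x) * (g y - g x)) =
      ∑ y ∈ G.neighborFinset x, w x y * (f * g) y - f x * ∑ y ∈ G.neighborFinset x, w x y * g y
        - g x * ∑ y ∈ G.neighborFinset x, w x y * f y + wdeg G w x * (f x * g x) := by
    simp only [wdeg, sum_mul, mul_sum, ← sum_sub_distrib, ← sum_add_distrib, Pi.mul_apply]
    exact sum_congr rfl fun y _ => by ring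
  rw [wgam, wlap, wlap, wlap, hexpand]
  field_simp
  simp only [Pi.mul_apply]
  ring

theorem wgam_self_eq_sum (f : V → ℝ) {x : V} (hx : wdeg G w x ≠ 0) :
    wgam G w f f x = (1 / 2) * (wdeg G w x)⁻¹ *
      ∑ y ∈ G.neighborFinset x, w x y * (f y - f x) ^ 2 := by
  simp only [wgam_eq_sum G w f f hx, sq]

end Laplacian

noncomputable def twoStepEnergy (G : SimpleGraph V) [G.LocallyFinite] (w : V → V → ℝ)
    (f : V → ℝ) (x : V) : ℝ :=
  ∑ y ∈ G.neighborFinset x,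
    w x y / wdeg G w y * ∑ z ∈ G.neighborFinset y, w y z * (f x - 2 * f y + f z) ^ 2

section Gamma2

variable (G : SimpleGraph V) [G.LocallyFinite] (w : V → V → ℝ) (f : V → ℝ)

theorem wgam_self_sub_mul_wlap (x : V) {y : V} (hy : wdeg G w y ≠ 0) :
    wgam G w f f y - (f y - f x) * wlap G w f y =
      (1 / 2) * ((wdeg G w y)⁻¹ *
        ∑ z ∈ G.neighborFinset y, w y z * (f x - 2 * f y + f z) ^ 2)
        - (1 / 2) * (f y - f x) ^ 2 := by
  have hexpand : ∑ z ∈ G.neighborFinset y, w y z * (f x - 2 * f y + f z) ^ 2 =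
      ∑ z ∈ G.neighborFinset y, w y z * (f z - f y) ^ 2
        - 2 * (f y - f x) * ∑ z ∈ G.neighborFinset y, w y z * (f z - f y)
        + (f y - f x) ^ 2 * wdeg G w y := by
    simp only [wdeg, mul_sum, ← sum_sub_distrib, ← sum_add_distrib]
    exact sum_congr rfl fun z _ => by ring
  rw [wgam_self_eq_sum G w f hy, wlap_eq_sum_sub G w f hy, hexpand]
  field_simp
  ring

theorem wgam2_eq {x : V} (hx : wdeg G w x ≠ 0)
    (hdeg : ∀ y ∈ G.neighborFinset x, wdeg G w y ≠ 0) :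
    wgam2 G w f x = (1 / 2) * wlap G w f x ^ 2 - wgam G w f f x
      + (wdeg G w x)⁻¹ * twoStepEnergy G w f x / 4 := by
  have hterm : ∀ y ∈ G.neighborFinset x,
      w x y * (wgam G w f f y - wgam G w f f x)
        - w x y * ((f y - f x) * (wlap G w f y - wlap G w f x)) =
      (1 / 2) * (w x y / wdeg G w y *
          ∑ z ∈ G.neighborFinset y, w y z * (f x - 2 * f y + f z) ^ 2)
        - (1 / 2) * (w x y * (f y - f x) ^ 2) - wgam G w f f x * w x y
        + wlap G w f x * (w x y * (f y - f x)) := by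
    intro y hy
    linear_combination w x y * wgam_self_sub_mul_wlap G w f x (hdeg y hy)
  have hsplit : wgam2 G w f x = (1 / 2) * (wdeg G w x)⁻¹ * ∑ y ∈ G.neighborFinset x,
      (w x y * (wgam G w f f y - wgam G w f f x)
        - w x y * ((f y - f x) * (wlap G w f y - wlap G w f x))) := by
    rw [wgam2, wlap_eq_sum_sub G w (wgam G w f f) hx, wgam_eq_sum G w f (wlap G w f) hx,
      sum_sub_distrib]
    ring
  rw [hsplit, sum_congr rfl hterm]
  simp only [sum_add_distrib, sum_sub_distrib, ← mul_sum]
  rw [← wdeg, ← twoStepEnergy]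
  have hQ : ∑ y ∈ G.neighborFinset x, w x y * (f y - f x) ^ 2 =
      2 * wdeg G w x * wgam G w f f x := by
    rw [wgam_self_eq_sum G w f hx]
    field_simp
  have hP : ∑ y ∈ G.neighborFinset x, w x y * (f y - f x) = wdeg G w x * wlap G w f x := by
    rw [wlap_eq_sum_sub G w f hx]
    field_simp
  rw [hQ, hP]
  field_simp
  ring

end Gamma2

noncomputable def twTerm (G : SimpleGraph V) [G.LocallyFinite] [DecidableEq V]
    (w : V → V → ℝ) (x y : V) : ℝ :=
  4 * w x y / wdeg G w y +
    ∑ z ∈ G.neighborFinset x ∩ G.neighborFinset y,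
      min (w x y / wdeg G w y) (w x z / wdeg G w z) * (w z y / w x y)

section LowerBound

variable {G : SimpleGraph V} [G.LocallyFinite] [DecidableEq V] {w : V → V → ℝ}

theorem tw_le_twTerm {x y : V} (hxy : G.Adj x y) : tw G w x ≤ twTerm G w x y :=
  ciInf_le (Set.finite_range _).bddBelow (⟨y, hxy⟩ : G.neighborSet x)

theorem twTerm_mul (hw : IsWeight G w) {x y : V} (hxy : G.Adj x y) (c : ℝ) :
    twTerm G w x y * (w x y * c) =
      4 * (w x y / wdeg G w y) * (w x y * c) +
        ∑ z ∈ G.neighborFinset x ∩ G.neighborFinset y,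
          min (w x y / wdeg G w y) (w x z / wdeg G w z) * w z y * c := by
  have hwxy : w x y ≠ 0 := (hw.2.1 x y hxy).ne'
  rw [twTerm, add_mul, sum_mul]
  congr 1
  · ring
  · exact sum_congr rfl fun z _ => by field_simp

theorem four_mul_sq_add_sum_common_le (hw : IsWeight G w) (f : V → ℝ) {x y : V}
    (hxy : G.Adj x y) :
    4 * w x y * (f y - f x) ^ 2 +
        ∑ z ∈ G.neighborFinset x ∩ G.neighborFinset y, w y z * (f x - 2 * f y + f z) ^ 2 ≤
      ∑ z ∈ G.neighborFinset y, w y z * (f x - 2 * f y + f z) ^ 2 := by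
  have hx : x ∉ G.neighborFinset x ∩ G.neighborFinset y := by simp
  have hsub : insert x (G.neighborFinset x ∩ G.neighborFinset y) ⊆ G.neighborFinset y :=
    insert_subset ((G.mem_neighborFinset y x).2 hxy.symm) inter_subset_right
  calc 4 * w x y * (f y - f x) ^ 2 +
        ∑ z ∈ G.neighborFinset x ∩ G.neighborFinset y, w y z * (f x - 2 * f y + f z) ^ 2
      = ∑ z ∈ insert x (G.neighborFinset x ∩ G.neighborFinset y),
          w y z * (f x - 2 * f y + f z) ^ 2 := by
        rw [sum_insert hx, hw.1 y x]
        ring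
    _ ≤ ∑ z ∈ G.neighborFinset y, w y z * (f x - 2 * f y + f z) ^ 2 :=
        sum_le_sum_of_subset_of_nonneg hsub fun z _ _ => mul_nonneg (hw.nonneg y z) (sq_nonneg _)

theorem sum_common_min_le (hw : IsWeight G w) (f : V → ℝ) (x : V) :
    ∑ y ∈ G.neighborFinset x, ∑ z ∈ G.neighborFinset x ∩ G.neighborFinset y,
        min (w x y / wdeg G w y) (w x z / wdeg G w z) * w z y * (f y - f x) ^ 2 ≤
      ∑ y ∈ G.neighborFinset x, ∑ z ∈ G.neighborFinset x ∩ G.neighborFinset y,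
        w x y / wdeg G w y * w y z * (f x - 2 * f y + f z) ^ 2 := by
  refine sum_sum_le_of_add_swap_le _ _ (fun y z => ?_) fun y _ z _ => ?_
  · simp only [mem_inter, mem_neighborFinset, G.adj_comm y z]
    tauto
  · have key := min_mul_add_sq_le (hw.div_wdeg_nonneg x y) (hw.div_wdeg_nonneg x z)
      (hw.nonneg y z) (f y - f x) (f z - f x)
    rw [hw.1 z y, min_comm (w x z / wdeg G w z)]
    linear_combination key

theorem tw_mul_le_twoStepEnergy (hw : IsWeight G w) (f : V → ℝ) (x : V) :
    tw G w x * ∑ y ∈ G.neighborFinset x, w x y * (f y - f x) ^ 2 ≤ twoStepEnergy G w f x := by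
  have hadj : ∀ y ∈ G.neighborFinset x, G.Adj x y := fun y hy => (G.mem_neighborFinset x y).1 hy
  calc tw G w x * ∑ y ∈ G.neighborFinset x, w x y * (f y - f x) ^ 2
      ≤ ∑ y ∈ G.neighborFinset x, twTerm G w x y * (w x y * (f y - f x) ^ 2) := by
        rw [mul_sum]
        exact sum_le_sum fun y hy => mul_le_mul_of_nonneg_right (tw_le_twTerm (hadj y hy))
          (mul_nonneg (hw.nonneg x y) (sq_nonneg _))
    _ = ∑ y ∈ G.neighborFinset x, 4 * (w x y / wdeg G w y) * (w x y * (f y - f x) ^ 2) +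
          ∑ y ∈ G.neighborFinset x, ∑ z ∈ G.neighborFinset x ∩ G.neighborFinset y,
            min (w x y / wdeg G w y) (w x z / wdeg G w z) * w z y * (f y - f x) ^ 2 := by
        rw [← sum_add_distrib]
        exact sum_congr rfl fun y hy => twTerm_mul hw (hadj y hy) _
    _ ≤ ∑ y ∈ G.neighborFinset x, 4 * (w x y / wdeg G w y) * (w x y * (f y - f x) ^ 2) +
          ∑ y ∈ G.neighborFinset x, ∑ z ∈ G.neighborFinset x ∩ G.neighborFinset y,
            w x y / wdeg G w y * w y z * (f x - 2 * f y + f z) ^ 2 :=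
        add_le_add le_rfl (sum_common_min_le hw f x)
    _ = ∑ y ∈ G.neighborFinset x, w x y / wdeg G w y *
          (4 * w x y * (f y - f x) ^ 2 + ∑ z ∈ G.neighborFinset x ∩ G.neighborFinset y,
            w y z * (f x - 2 * f y + f z) ^ 2) := by
        rw [← sum_add_distrib]
        refine sum_congr rfl fun y _ => ?_
        rw [mul_add, mul_sum]
        congr 1
        · ring
        · exact sum_congr rfl fun z _ => by ring
    _ ≤ twoStepEnergy G w f x :=
        sum_le_sum fun y hy => mul_le_mul_of_nonneg_left
          (four_mul_sq_add_sum_common_le hw f (hadj y hy)) (hw.div_wdeg_nonneg x y)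

end LowerBound

theorem weighted_CD_inequality_triangles_general (G : SimpleGraph V) [G.LocallyFinite]
    [DecidableEq V]
    (w : V → V → ℝ) (hw : IsWeight G w)
    (f : V → ℝ) (x : V) :
    wgam2 G w f x ≥
      (1 / 2) * (wlap G w f x) ^ 2 + ((1 / 2) * tw G w x - 1) * wgam G w f f x := by
  rcases (G.neighborFinset x).eq_empty_or_nonempty with hisolated | ⟨y, hy⟩
  · -- `d_x = 0`, so `Δf(x) = -f(x)` (as `0⁻¹ = 0`) and `t_w(x) = 0`, an infimum over no neighbours
    have : IsEmpty (G.neighborSet x) :=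
      ⟨fun ⟨z, hz⟩ => by simpa [hisolated] using (G.mem_neighborFinset x z).2 hz⟩
    have htw : tw G w x = 0 := Real.iInf_of_isEmpty _
    simp only [wgam2, wgam, wlap, wdeg, hisolated, sum_empty, mul_zero, zero_sub,
      Pi.mul_apply, htw]
    nlinarith [sq_nonneg (f x)]
  · have hx : 0 < wdeg G w x := hw.wdeg_pos ((G.mem_neighborFinset x y).1 hy)
    have hdeg : ∀ z ∈ G.neighborFinset x, wdeg G w z ≠ 0 := fun z hz =>
      (hw.wdeg_pos ((G.mem_neighborFinset x z).1 hz).symm).ne'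
    have hbound := mul_le_mul_of_nonneg_left (tw_mul_le_twoStepEnergy hw f x) (inv_nonneg.2 hx.le)
    rw [wgam2_eq G w f hx.ne' hdeg, wgam_self_eq_sum G w f hx.ne']
    linarith

/-- On a weighted connected locally finite graph, the Laplacian satisfies
`Γ₂(f,f)(x) ≥ (1/2)(Δf(x))² + ((1/2)t_w(x) - 1)·Γ(f,f)(x)`. -/
theorem weighted_CD_inequality_triangles (G : SimpleGraph V) [G.LocallyFinite]
    [DecidableRel G.Adj] [DecidableEq V]
    (w : V → V → ℝ) (hw : IsWeight G w) (hG : G.Connected)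
    (f : V → ℝ) (x : V) :
    wgam2 G w f x ≥
      (1 / 2) * (wlap G w f x) ^ 2 + ((1 / 2) * tw G w x - 1) * wgam G w f f x :=
  weighted_CD_inequality_triangles_general G w hw f x
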